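/- arXiv:2208.02476 — 6 statements merged into one kernel-verified Lean document; each statement's English description precedes it below -/
import Mathlib

section
/- Let (φ, ψ) be an n×n matrix factorization of f ∈ K[[x]] and (φ', ψ') an m×m matrix factorization of g ∈ K[[y]]. Then the pair of 2nm×2nm block matrices ( [[φ⊗I_m, I_n⊗φ'], [-I_n⊗ψ', ψ⊗I_m]], [[ψ⊗I_m, -I_n⊗φ'], [I_n⊗ψ', φ⊗I_m]] ) is a matrix factorization of f + g over K[[x,y]], provided the blocks φ⊗I_m and I_n⊗φ' (and similarly for ψ, ψ') commute appropriately, which holds since they act on different tensor factors. -/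
open Matrix Kronecker

/-!
The blocks `φ ⊗ 1, ψ ⊗ 1` act on the first tensor factor and `1 ⊗ φ', 1 ⊗ ψ'` on the second,
so each of the former commutes with each of the latter. Multiplying out the two block
matrices, the off-diagonal blocks are commutators of such pairs and vanish, while the
diagonal blocks are `φψ ⊗ 1 + 1 ⊗ φ'ψ' = (f + g) • 1` and its analogues.
-/

namespace Matrix

theorem fromBlocks_smul_one {l m R : Type*} [DecidableEq l] [DecidableEq m] [Semiring R] (c : R) :
    fromBlocks (c • 1 : Matrix l l R) 0 0 (c • 1 : Matrix m m R) = c • 1 := by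
  simp only [← fromBlocks_one, fromBlocks_smul, smul_zero]

def IsMatrixFactorization {ι R : Type*} [Fintype ι] [DecidableEq ι] [Ring R]
    (f : R) (A B : Matrix ι ι R) : Prop :=
  A * B = f • 1 ∧ B * A = f • 1

namespace IsMatrixFactorization

section Kronecker

variable {ι κ R : Type*} [Fintype ι] [DecidableEq ι] [Fintype κ] [DecidableEq κ] [CommRing R]
  {f : R}

theorem kronecker_one {A B : Matrix ι ι R} (h : IsMatrixFactorization f A B) :
    IsMatrixFactorization f (A ⊗ₖ (1 : Matrix κ κ R)) (B ⊗ₖ 1) := by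
  constructor
  · rw [← mul_kronecker_mul, h.1, Matrix.mul_one, smul_kronecker, one_kronecker_one]
  · rw [← mul_kronecker_mul, h.2, Matrix.mul_one, smul_kronecker, one_kronecker_one]

theorem one_kronecker {A B : Matrix κ κ R} (h : IsMatrixFactorization f A B) :
    IsMatrixFactorization f ((1 : Matrix ι ι R) ⊗ₖ A) (1 ⊗ₖ B) := by
  constructor
  · rw [← mul_kronecker_mul, h.1, Matrix.mul_one, kronecker_smul, one_kronecker_one]
  · rw [← mul_kronecker_mul, h.2, Matrix.mul_one, kronecker_smul, one_kronecker_one]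

end Kronecker

theorem fromBlocks {ι R : Type*} [Fintype ι] [DecidableEq ι] [Ring R] {f g : R}
    {P Q P' Q' : Matrix ι ι R} (h : IsMatrixFactorization f P Q)
    (h' : IsMatrixFactorization g P' Q')
    (hPP' : Commute P P') (hPQ' : Commute P Q') (hQP' : Commute Q P') (hQQ' : Commute Q Q') :
    IsMatrixFactorization (f + g) (fromBlocks P P' (-Q') Q) (fromBlocks Q (-P') Q' P) := by
  constructor <;>
  · rw [fromBlocks_multiply]
    simp only [Matrix.mul_neg, Matrix.neg_mul, neg_neg, hPP'.eq, hPQ'.eq, hQP'.eq, hQQ'.eq,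
      h.1, h.2, h'.1, h'.2, neg_add_cancel, add_neg_cancel]
    rw [← add_smul, ← add_smul, add_comm g f, fromBlocks_smul_one]

end IsMatrixFactorization

theorem commute_kronecker_one_one_kronecker {ι κ R : Type*} [Fintype ι] [DecidableEq ι]
    [Fintype κ] [DecidableEq κ] [CommRing R] (A : Matrix ι ι R) (B : Matrix κ κ R) :
    Commute (A ⊗ₖ (1 : Matrix κ κ R)) (1 ⊗ₖ B) := by
  simp only [Commute, SemiconjBy, ← mul_kronecker_mul, Matrix.mul_one, Matrix.one_mul]

end Matrix

/-- Yoshino's tensor product: if `(φ, ψ)` is a matrix factorization of `f` and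
`(φ', ψ')` one of `g` (viewed over `K[[x,y]]`), then the displayed pair of
`2nm×2nm` block matrices is a matrix factorization of `f + g`. -/
theorem yoshino_tensor_is_matrix_factorization
    {K : Type*} [Field K] {σ τ : Type*} {n m : ℕ}
    (f g : MvPowerSeries (σ ⊕ τ) K)
    (φ ψ : Matrix (Fin n) (Fin n) (MvPowerSeries (σ ⊕ τ) K))
    (φ' ψ' : Matrix (Fin m) (Fin m) (MvPowerSeries (σ ⊕ τ) K))
    (h1 : φ * ψ = f • 1) (h2 : ψ * φ = f • 1)
    (h3 : φ' * ψ' = g • 1) (h4 : ψ' * φ' = g • 1) :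
    fromBlocks (φ ⊗ₖ 1) (1 ⊗ₖ φ') (-(1 ⊗ₖ ψ')) (ψ ⊗ₖ 1) *
        fromBlocks (ψ ⊗ₖ 1) (-(1 ⊗ₖ φ')) (1 ⊗ₖ ψ') (φ ⊗ₖ 1) = (f + g) • 1 ∧
    fromBlocks (ψ ⊗ₖ 1) (-(1 ⊗ₖ φ')) (1 ⊗ₖ ψ') (φ ⊗ₖ 1) *
        fromBlocks (φ ⊗ₖ 1) (1 ⊗ₖ φ') (-(1 ⊗ₖ ψ')) (ψ ⊗ₖ 1) = (f + g) • 1 :=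
  IsMatrixFactorization.fromBlocks (IsMatrixFactorization.kronecker_one ⟨h1, h2⟩)
    (IsMatrixFactorization.one_kronecker ⟨h3, h4⟩)
    (commute_kronecker_one_one_kronecker _ _) (commute_kronecker_one_one_kronecker _ _)
    (commute_kronecker_one_one_kronecker _ _) (commute_kronecker_one_one_kronecker _ _)
end

section
/- Let (φ, ψ) be an n×n matrix factorization of f ∈ K[[x]] and (φ', ψ') an m×m matrix factorization of g ∈ K[[y]]. Then the variant Yoshino tensor product given by the block matrices ( [[I_n⊗φ', ψ⊗I_m], [φ⊗I_m, -I_n⊗ψ']], [[I_n⊗ψ', ψ⊗I_m], [φ⊗I_m, -I_n⊗φ']] ) is a 2nm×2nm matrix factorization of f + g over K[[x,y]]. -/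
/-!
Matrices `1 ⊗ₖ A` and `B ⊗ₖ 1` act on distinct tensor factors, so they commute. Hence in both
block products the off-diagonal blocks are commutators and vanish, while each diagonal block is
a sum of one factorization of `f` and one of `g`, i.e. `f • 1 + g • 1`.
-/

open Matrix Kronecker

section BlockFactorization

variable {R ι : Type*} [CommRing R] [Fintype ι] [DecidableEq ι]

theorem fromBlocks_neg_mul_fromBlocks_neg_eq_smul_one {f g : R} {A B C D : Matrix ι ι R}
    (hAD : A * D = g • 1) (hDA : D * A = g • 1) (hBC : B * C = f • 1) (hCB : C * B = f • 1)
    (hAB : Commute A B) (hCD : Commute C D) :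
    fromBlocks A B C (-D) * fromBlocks D B C (-A) = (f + g) • 1 := by
  rw [fromBlocks_multiply, ← fromBlocks_one, fromBlocks_smul, smul_zero, hAB.eq, hCD.eq]
  simp only [mul_neg, neg_mul, neg_neg, hAD, hDA, hBC, hCB, add_smul, add_comm,
    add_neg_cancel]

end BlockFactorization

section Kronecker

variable {R ι κ : Type*} [CommRing R] [Fintype ι] [DecidableEq ι] [Fintype κ] [DecidableEq κ]

theorem commute_one_kronecker_kronecker_one (A : Matrix κ κ R) (B : Matrix ι ι R) :
    Commute (1 ⊗ₖ A : Matrix (ι × κ) (ι × κ) R) (B ⊗ₖ 1) := by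
  simp only [Commute, SemiconjBy, ← mul_kronecker_mul, Matrix.one_mul, Matrix.mul_one]

theorem kronecker_one_mul_kronecker_one_of_mul_eq_smul_one {f : R} {A B : Matrix ι ι R}
    (h : A * B = f • 1) : (A ⊗ₖ 1 : Matrix (ι × κ) (ι × κ) R) * (B ⊗ₖ 1) = f • 1 := by
  rw [← mul_kronecker_mul, h, Matrix.one_mul, smul_kronecker, one_kronecker_one]

theorem one_kronecker_mul_one_kronecker_of_mul_eq_smul_one {f : R} {A B : Matrix κ κ R}
    (h : A * B = f • 1) : (1 ⊗ₖ A : Matrix (ι × κ) (ι × κ) R) * (1 ⊗ₖ B) = f • 1 := by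
  rw [← mul_kronecker_mul, h, Matrix.one_mul, kronecker_smul, one_kronecker_one]

end Kronecker

/-- The variant Yoshino tensor product `⊗̂'` yields a `2nm×2nm` matrix
factorization of `f + g`. -/
theorem yoshino_tensor_variant_is_matrix_factorization
    {K : Type*} [Field K] {σ τ : Type*} {n m : ℕ}
    (f g : MvPowerSeries (σ ⊕ τ) K)
    (φ ψ : Matrix (Fin n) (Fin n) (MvPowerSeries (σ ⊕ τ) K))
    (φ' ψ' : Matrix (Fin m) (Fin m) (MvPowerSeries (σ ⊕ τ) K))
    (h1 : φ * ψ = f • 1) (h2 : ψ * φ = f • 1)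
    (h3 : φ' * ψ' = g • 1) (h4 : ψ' * φ' = g • 1) :
    fromBlocks (1 ⊗ₖ φ') (ψ ⊗ₖ 1) (φ ⊗ₖ 1) (-(1 ⊗ₖ ψ')) *
        fromBlocks (1 ⊗ₖ ψ') (ψ ⊗ₖ 1) (φ ⊗ₖ 1) (-(1 ⊗ₖ φ')) = (f + g) • 1 ∧
    fromBlocks (1 ⊗ₖ ψ') (ψ ⊗ₖ 1) (φ ⊗ₖ 1) (-(1 ⊗ₖ φ')) *
        fromBlocks (1 ⊗ₖ φ') (ψ ⊗ₖ 1) (φ ⊗ₖ 1) (-(1 ⊗ₖ ψ')) = (f + g) • 1 := by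
  have hψφ := kronecker_one_mul_kronecker_one_of_mul_eq_smul_one (κ := Fin m) h2
  have hφψ := kronecker_one_mul_kronecker_one_of_mul_eq_smul_one (κ := Fin m) h1
  have hφ'ψ' := one_kronecker_mul_one_kronecker_of_mul_eq_smul_one (ι := Fin n) h3
  have hψ'φ' := one_kronecker_mul_one_kronecker_of_mul_eq_smul_one (ι := Fin n) h4
  exact ⟨fromBlocks_neg_mul_fromBlocks_neg_eq_smul_one hφ'ψ' hψ'φ' hψφ hφψ
      (commute_one_kronecker_kronecker_one φ' ψ) (commute_one_kronecker_kronecker_one ψ' φ).symm,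
    fromBlocks_neg_mul_fromBlocks_neg_eq_smul_one hψ'φ' hφ'ψ' hψφ hφψ
      (commute_one_kronecker_kronecker_one ψ' ψ) (commute_one_kronecker_kronecker_one φ' φ).symm⟩
end

section
/- Let (φ, ψ) be an n×n matrix factorization of f and (φ', ψ') an m×m matrix factorization of g. Then the pair of 2nm×2nm block-diagonal matrices ( diag(φ⊗φ', φ⊗φ'), diag(ψ⊗ψ', ψ⊗ψ') ) is a matrix factorization of fg, i.e., the multiplicative tensor product X ⊗̃ X' is an object of MF(K[[x,y]], fg) of size 2nm. -/
open Matrix Kronecker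

namespace Matrix

variable {ι κ R : Type*} [Fintype ι] [DecidableEq ι] [Fintype κ] [DecidableEq κ]

def IsFactorization [Semiring R] (A B : Matrix ι ι R) (h : R) : Prop :=
  A * B = h • 1 ∧ B * A = h • 1

theorem kronecker_mul_kronecker_eq_smul_one [CommSemiring R] {A B : Matrix ι ι R}
    {C D : Matrix κ κ R} {a c : R} (hAB : A * B = a • 1) (hCD : C * D = c • 1) :
    (A ⊗ₖ C) * (B ⊗ₖ D) = (a * c) • 1 := by
  rw [← mul_kronecker_mul, hAB, hCD, smul_kronecker, kronecker_smul, one_kronecker_one,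
    smul_smul]

theorem fromBlocks_diag_mul_fromBlocks_diag_eq_smul_one [Semiring R] {A B : Matrix ι ι R} {r : R}
    (hAB : A * B = r • 1) :
    fromBlocks A 0 0 A * fromBlocks B 0 0 B = r • (1 : Matrix (ι ⊕ ι) (ι ⊕ ι) R) := by
  rw [fromBlocks_multiply, ← fromBlocks_one, fromBlocks_smul]
  simp only [Matrix.mul_zero, Matrix.zero_mul, add_zero, zero_add, smul_zero, hAB]

namespace IsFactorization

theorem kronecker [CommSemiring R] {A B : Matrix ι ι R} {C D : Matrix κ κ R} {a c : R}
    (hAB : IsFactorization A B a) (hCD : IsFactorization C D c) :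
    IsFactorization (A ⊗ₖ C) (B ⊗ₖ D) (a * c) :=
  ⟨kronecker_mul_kronecker_eq_smul_one hAB.1 hCD.1,
    kronecker_mul_kronecker_eq_smul_one hAB.2 hCD.2⟩

theorem fromBlocks_diag [Semiring R] {A B : Matrix ι ι R} {r : R}
    (hAB : IsFactorization A B r) :
    IsFactorization (fromBlocks A 0 0 A) (fromBlocks B 0 0 B) r :=
  ⟨fromBlocks_diag_mul_fromBlocks_diag_eq_smul_one hAB.1,
    fromBlocks_diag_mul_fromBlocks_diag_eq_smul_one hAB.2⟩

end IsFactorization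

end Matrix

/-- The multiplicative tensor product `X ⊗̃ X' = (diag(φ⊗φ', φ⊗φ'), diag(ψ⊗ψ', ψ⊗ψ'))`
is a `2nm×2nm` matrix factorization of `fg`. -/
theorem mult_tensor_is_matrix_factorization
    {K : Type*} [Field K] {σ τ : Type*} {n m : ℕ}
    (f g : MvPowerSeries (σ ⊕ τ) K)
    (φ ψ : Matrix (Fin n) (Fin n) (MvPowerSeries (σ ⊕ τ) K))
    (φ' ψ' : Matrix (Fin m) (Fin m) (MvPowerSeries (σ ⊕ τ) K))
    (h1 : φ * ψ = f • 1) (h2 : ψ * φ = f • 1)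
    (h3 : φ' * ψ' = g • 1) (h4 : ψ' * φ' = g • 1) :
    fromBlocks (φ ⊗ₖ φ') 0 0 (φ ⊗ₖ φ') * fromBlocks (ψ ⊗ₖ ψ') 0 0 (ψ ⊗ₖ ψ') =
      (f * g) • 1 ∧
    fromBlocks (ψ ⊗ₖ ψ') 0 0 (ψ ⊗ₖ ψ') * fromBlocks (φ ⊗ₖ φ') 0 0 (φ ⊗ₖ φ') =
      (f * g) • 1 :=
  (IsFactorization.kronecker ⟨h1, h2⟩ ⟨h3, h4⟩).fromBlocks_diag
end

section
/- Let (φ, ψ) be an n×n matrix factorization of f and (φ', ψ') an m×m matrix factorization of g. Then the pair of 2nm×2nm anti-diagonal block matrices ( [[0, φ⊗φ'], [φ⊗φ', 0]], [[0, ψ⊗ψ'], [ψ⊗ψ', 0]] ) is a matrix factorization of fg. -/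
open Matrix Kronecker

namespace Matrix

theorem kronecker_mul_kronecker_eq_smul_one_s5 {R ι κ : Type*} [CommSemiring R]
    [Fintype ι] [Fintype κ] [DecidableEq ι] [DecidableEq κ]
    {A B : Matrix ι ι R} {A' B' : Matrix κ κ R} {f g : R}
    (h : A * B = f • 1) (h' : A' * B' = g • 1) :
    (A ⊗ₖ A') * (B ⊗ₖ B') = (f * g) • 1 := by
  rw [← mul_kronecker_mul, h, h', smul_kronecker, kronecker_smul, one_kronecker_one, smul_smul]

theorem fromBlocks_zero_mul_fromBlocks_zero_eq_smul_one {R ι κ : Type*} [Semiring R]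
    [Fintype κ] [DecidableEq ι] {X : Matrix ι κ R} {Y : Matrix κ ι R} {c : R}
    (h : X * Y = c • 1) :
    fromBlocks 0 X X 0 * fromBlocks 0 Y Y 0 = c • (1 : Matrix (ι ⊕ ι) (ι ⊕ ι) R) := by
  rw [fromBlocks_multiply, ← fromBlocks_one, fromBlocks_smul]
  simp [h]

end Matrix

/-- The variant `⊗̃'` of the multiplicative tensor product: the pair of
anti-diagonal block matrices is a `2nm×2nm` matrix factorization of `fg`. -/
theorem mult_tensor_variant_is_matrix_factorization
    {K : Type*} [Field K] {σ τ : Type*} {n m : ℕ}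
    (f g : MvPowerSeries (σ ⊕ τ) K)
    (φ ψ : Matrix (Fin n) (Fin n) (MvPowerSeries (σ ⊕ τ) K))
    (φ' ψ' : Matrix (Fin m) (Fin m) (MvPowerSeries (σ ⊕ τ) K))
    (h1 : φ * ψ = f • 1) (h2 : ψ * φ = f • 1)
    (h3 : φ' * ψ' = g • 1) (h4 : ψ' * φ' = g • 1) :
    fromBlocks 0 (φ ⊗ₖ φ') (φ ⊗ₖ φ') 0 * fromBlocks 0 (ψ ⊗ₖ ψ') (ψ ⊗ₖ ψ') 0 =
      (f * g) • 1 ∧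
    fromBlocks 0 (ψ ⊗ₖ ψ') (ψ ⊗ₖ ψ') 0 * fromBlocks 0 (φ ⊗ₖ φ') (φ ⊗ₖ φ') 0 =
      (f * g) • 1 :=
  ⟨fromBlocks_zero_mul_fromBlocks_zero_eq_smul_one (kronecker_mul_kronecker_eq_smul_one_s5 h1 h3),
    fromBlocks_zero_mul_fromBlocks_zero_eq_smul_one (kronecker_mul_kronecker_eq_smul_one_s5 h2 h4)⟩
end

section
/- Given morphisms ζ_f = (α_f, β_f) : X_f → X_f' in MF(K[[x]], f) and ζ_g = (α_g, β_g) : X_g → X_g' in MF(K[[y]], g), the pair (α_f ⊗ α_g, β_f ⊗ β_g) is a morphism X_f ⊗̄ X_g → X_f' ⊗̄ X_g' in MF(K[[x,y]], fg). -/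
open Matrix Kronecker

/-- Given morphisms `ζ_f = (α_f, β_f) : (φ,ψ) → (φ',ψ')` in `MF(K[[x]], f)` and
`ζ_g = (α_g, β_g) : (σM,ρ) → (σM',ρ')` in `MF(K[[y]], g)`, the pair
`(α_f ⊗ α_g, β_f ⊗ β_g)` is a morphism `X_f ⊗̄ X_g → X_f' ⊗̄ X_g'` in
`MF(K[[x,y]], fg)`. -/
theorem reduced_mult_tensor_morphism
    {K : Type*} [Field K] {σ τ : Type*} {n n' m m' : ℕ}
    (f g : MvPowerSeries (σ ⊕ τ) K)
    (φ ψ : Matrix (Fin n) (Fin n) (MvPowerSeries (σ ⊕ τ) K))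
    (φ' ψ' : Matrix (Fin n') (Fin n') (MvPowerSeries (σ ⊕ τ) K))
    (σM ρ : Matrix (Fin m) (Fin m) (MvPowerSeries (σ ⊕ τ) K))
    (σM' ρ' : Matrix (Fin m') (Fin m') (MvPowerSeries (σ ⊕ τ) K))
    (hX : φ * ψ = f • 1 ∧ ψ * φ = f • 1)
    (hX' : φ' * ψ' = f • 1 ∧ ψ' * φ' = f • 1)
    (hY : σM * ρ = g • 1 ∧ ρ * σM = g • 1)
    (hY' : σM' * ρ' = g • 1 ∧ ρ' * σM' = g • 1)
    (αf βf : Matrix (Fin n') (Fin n) (MvPowerSeries (σ ⊕ τ) K))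
    (αg βg : Matrix (Fin m') (Fin m) (MvPowerSeries (σ ⊕ τ) K))
    (hf1 : αf * φ = φ' * βf) (hf2 : ψ' * αf = βf * ψ)
    (hg1 : αg * σM = σM' * βg) (hg2 : ρ' * αg = βg * ρ) :
    (αf ⊗ₖ αg) * (φ ⊗ₖ σM) = (φ' ⊗ₖ σM') * (βf ⊗ₖ βg) ∧
    (ψ' ⊗ₖ ρ') * (αf ⊗ₖ αg) = (βf ⊗ₖ βg) * (ψ ⊗ₖ ρ) := by
  constructor
  · rw [← mul_kronecker_mul, ← mul_kronecker_mul, hf1, hg1]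
  · rw [← mul_kronecker_mul, ← mul_kronecker_mul, hf2, hg2]
end

section
/- If (C, D) is an n×n matrix factorization of f (with CD = DC = f·I_n) and g, h are polynomials, then the 'first variant' matrices P' = [[h·I_n, D],[C, -g·I_n]] and Q' = [[g·I_n, D],[C, -h·I_n]] satisfy P'Q' = (f+gh)·I_{2n}, so (P', Q') is a 2n×2n matrix factorization of f + gh. -/
open Matrix

/- The off-diagonal blocks `hD - Dh` and `gC - Cg` vanish because scalar matrices are central. -/
theorem fromBlocks_smul_one_mul_fromBlocks_smul_one {R : Type*} [CommRing R]
    {n : Type*} [Fintype n] [DecidableEq n] {f : R} {C D : Matrix n n R}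
    (hCD : C * D = f • 1) (hDC : D * C = f • 1) (g h : R) :
    fromBlocks (h • 1) D C (-(g • 1)) * fromBlocks (g • 1) D C (-(h • 1)) = (f + g * h) • 1 := by
  rw [fromBlocks_multiply, ← fromBlocks_one, fromBlocks_smul, smul_zero]
  congr 1
  · rw [hDC, smul_mul_smul_comm, Matrix.one_mul, mul_comm, add_smul, add_comm]
  · rw [smul_one_mul, Matrix.mul_neg, mul_smul_one, add_neg_cancel]
  · rw [mul_smul_one, Matrix.neg_mul, smul_one_mul, add_neg_cancel]
  · rw [hCD, neg_mul_neg, smul_mul_smul_comm, Matrix.one_mul, add_smul]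

/-- First variant of the standard method: with `P' = [[h·I, D],[C, -g·I]]` and
`Q' = [[g·I, D],[C, -h·I]]` one has `P'Q' = (f + gh)·I`, so `(P', Q')` is a
`2n×2n` matrix factorization of `f + gh`. -/
theorem standard_method_first_variant
    {K : Type*} [Field K] {σ : Type*} {n : ℕ}
    (f g h : MvPolynomial σ K)
    (C D : Matrix (Fin n) (Fin n) (MvPolynomial σ K))
    (h1 : C * D = f • 1) (h2 : D * C = f • 1) :
    fromBlocks (h • 1) D C (-(g • 1)) * fromBlocks (g • 1) D C (-(h • 1)) =
      (f + g * h) • 1 ∧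
    fromBlocks (g • 1) D C (-(h • 1)) * fromBlocks (h • 1) D C (-(g • 1)) =
      (f + g * h) • 1 :=
  ⟨fromBlocks_smul_one_mul_fromBlocks_smul_one h1 h2 g h,
    mul_comm g h ▸ fromBlocks_smul_one_mul_fromBlocks_smul_one h1 h2 h g⟩
end
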